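/- Assume ψ is convex and let u be a global solution of the first-order gradient system (DS-1). Then for every y ∈ H and every t > 0 one has ‖u′(t)‖ ≤ ‖∇ψ(y)‖ + (1/t)‖u(0) − y‖. -/

import Mathlib

/-!
Along the flow `‖u'‖² = ‖∇ψ(u)‖²` is nonincreasing: its derivative is `-2⟪∇²ψ(u) u', u'⟫ ≤ 0`
by convexity. Fix `t > 0` and `y`. Then
`Φ(s) = ½‖u(s) - y‖² + s (ψ(u(s)) - ψ(y)) + ½ s² ‖u'(t)‖²` is nonincreasing on `[0, t]`:
in `Φ'` the subgradient inequality `ψ(y) ≥ ψ(u) + ⟪∇ψ(u), y - u⟫` absorbs the first terms and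
`‖u'(t)‖ ≤ ‖u'(s)‖` the rest. Bounding `ψ(u(t)) - ψ(y) ≥ -‖∇ψ(y)‖ ‖u(t) - y‖` in `Φ(t) ≤ Φ(0)`
and completing the square gives `t²‖u'(t)‖² ≤ ‖u(0) - y‖² + t²‖∇ψ(y)‖²`.
-/

open Set
open scoped RealInnerProductSpace

section

variable {H : Type*} [NormedAddCommGroup H] [InnerProductSpace ℝ H] [CompleteSpace H]

theorem HasGradientAt.comp_hasDerivAt {f : H → ℝ} {g : H} {γ : ℝ → H} {γ' : H} {t : ℝ}
    (hf : HasGradientAt f g (γ t)) (hγ : HasDerivAt γ γ' t) :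
    HasDerivAt (fun s => f (γ s)) ⟪g, γ'⟫ t :=
  (hasGradientAt_iff_hasFDerivAt.mp hf).comp_hasDerivAt t hγ

theorem ContDiff.gradient {f : H → ℝ} {m n : WithTop ℕ∞} (hf : ContDiff ℝ n f)
    (hmn : m + 1 ≤ n) : ContDiff ℝ m (gradient f) :=
  (InnerProductSpace.toDual ℝ H).symm.contDiff.comp (hf.fderiv_right hmn)

namespace ConvexOn

variable {f : H → ℝ}

theorem inner_gradient_le_sub (hf : ConvexOn ℝ univ f) {x g : H} (hg : HasGradientAt f g x)
    (z : H) : ⟪g, z - x⟫ ≤ f z - f x := by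
  have hscalede : ConvexOn ℝ univ (fun θ : ℝ => f (x + θ • (z - x))) := by
    simpa [Function.comp_def, AffineMap.lineMap_apply_module', add_comm] using
      hf.comp_affineMap (AffineMap.lineMap x z)
  have hderiv : HasDerivAt (fun θ : ℝ => f (x + θ • (z - x))) ⟪g, z - x⟫ 0 := by
    refine HasGradientAt.comp_hasDerivAt (by simpa using hg) ?_
    simpa using ((hasDerivAt_id (0 : ℝ)).smul_const (z - x)).const_add x
  simpa [slope_def_field] using
    hscalede.le_slope_of_hasDerivAt (mem_univ 0) (mem_univ 1) one_pos hderiv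

theorem inner_gradient_sub_gradient_nonneg (hf : ConvexOn ℝ univ f) {x z gx gz : H}
    (hx : HasGradientAt f gx x) (hz : HasGradientAt f gz z) : 0 ≤ ⟪gx - gz, x - z⟫ := by
  have h₁ := hf.inner_gradient_le_sub hx z
  have h₂ := hf.inner_gradient_le_sub hz x
  rw [← neg_sub x z, inner_neg_right] at h₁
  rw [inner_sub_left]
  linarith

theorem inner_fderiv_gradient_apply_self_nonneg (hf : ConvexOn ℝ univ f)
    (hd : Differentiable ℝ f) {x : H} (hx : DifferentiableAt ℝ (gradient f) x) (v : H) :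
    0 ≤ ⟪fderiv ℝ (gradient f) x v, v⟫ := by
  have hmono : Monotone fun θ : ℝ => ⟪gradient f (x + θ • v), v⟫ := by
    intro a b hab
    have h := hf.inner_gradient_sub_gradient_nonneg (hd (x + b • v)).hasGradientAt
      (hd (x + a • v)).hasGradientAt
    rw [add_sub_add_left_eq_sub, ← sub_smul, inner_smul_right, inner_sub_left] at h
    rcases hab.eq_or_lt with rfl | hlt
    · rfl
    · exact sub_nonneg.mp ((mul_nonneg_iff_of_pos_left (sub_pos.2 hlt)).1 h)
  have hderiv : HasDerivAt (fun θ : ℝ => ⟪gradient f (x + θ • v), v⟫)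
      ⟪fderiv ℝ (gradient f) x v, v⟫ 0 := by
    have hscalede : HasDerivAt (fun θ : ℝ => x + θ • v) v 0 := by
      simpa using ((hasDerivAt_id (0 : ℝ)).smul_const v).const_add x
    have hx' : HasFDerivAt (gradient f) (fderiv ℝ (gradient f) x) (x + (0 : ℝ) • v) := by
      simpa using hx.hasFDerivAt
    simpa using (hx'.comp_hasDerivAt 0 hscalede).inner ℝ (hasDerivAt_const 0 v)
  exact hderiv.nonneg_of_monotone hmono

end ConvexOn

def IsGradientFlow (ψ : H → ℝ) (u : ℝ → H) : Prop :=
  ∀ t ∈ Ici (0 : ℝ), HasDerivWithinAt u (-gradient ψ (u t)) (Ici 0) t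

namespace IsGradientFlow

variable {ψ : H → ℝ} {u : ℝ → H}

theorem continuousOn (hu : IsGradientFlow ψ u) : ContinuousOn u (Ici 0) :=
  fun t ht => (hu t ht).continuousWithinAt

theorem hasDerivAt (hu : IsGradientFlow ψ u) {t : ℝ} (ht : 0 < t) :
    HasDerivAt u (-gradient ψ (u t)) t :=
  (hu t ht.le).hasDerivAt (Ici_mem_nhds ht)

theorem antitoneOn_norm_gradient_sq (hu : IsGradientFlow ψ u) (hψ : ContDiff ℝ 2 ψ)
    (hconv : ConvexOn ℝ univ ψ) : AntitoneOn (fun t => ‖gradient ψ (u t)‖ ^ 2) (Ici 0) := by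
  have hG : ContDiff ℝ 1 (gradient ψ) := hψ.gradient (by norm_num)
  refine antitoneOn_of_hasDerivWithinAt_nonpos (convex_Ici 0)
    ((hG.continuous.comp_continuousOn hu.continuousOn).norm.pow 2) (fun t ht => ?_) (fun t ht => ?_)
    (f' := fun t => 2 * ⟪gradient ψ (u t), fderiv ℝ (gradient ψ) (u t) (-gradient ψ (u t))⟫)
  · rw [interior_Ici] at ht
    exact ((hG.differentiable one_ne_zero (u t)).hasFDerivAt.comp_hasDerivAt t
      (hu.hasDerivAt ht)).norm_sq.hasDerivWithinAt
  · rw [interior_Ici] at ht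
    have := hconv.inner_fderiv_gradient_apply_self_nonneg (hψ.differentiable two_ne_zero)
      (hG.differentiable one_ne_zero (u t)) (gradient ψ (u t))
    rw [map_neg, inner_neg_right, real_inner_comm]
    linarith

theorem antitoneOn_lyapunov (hu : IsGradientFlow ψ u) (hψ : ContDiff ℝ 2 ψ)
    (hconv : ConvexOn ℝ univ ψ) (y : H) {t : ℝ} (ht : 0 < t) :
    AntitoneOn (fun s => ‖u s - y‖ ^ 2 / 2 + s * (ψ (u s) - ψ y) +
      s ^ 2 / 2 * ‖gradient ψ (u t)‖ ^ 2) (Icc 0 t) := by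
  have hd : Differentiable ℝ ψ := hψ.differentiable two_ne_zero
  have hcont : ContinuousOn u (Icc 0 t) := hu.continuousOn.mono Icc_subset_Ici_self
  have hψc : Continuous ψ := hψ.continuous
  refine antitoneOn_of_hasDerivWithinAt_nonpos (convex_Icc 0 t) (by fun_prop (disch := norm_num))
    (fun s hs => ?_) (fun s hs => ?_)
    (f' := fun s => 2 * ⟪u s - y, -gradient ψ (u s)⟫ / 2 +
      (1 * (ψ (u s) - ψ y) + s * ⟪gradient ψ (u s), -gradient ψ (u s)⟫) +
      2 * s ^ 1 / 2 * ‖gradient ψ (u t)‖ ^ 2)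
  · rw [interior_Icc] at hs
    have hus := hu.hasDerivAt hs.1
    exact ((((hus.sub_const y).norm_sq.div_const 2).add ((hasDerivAt_id s).mul
      (((hd (u s)).hasGradientAt.comp_hasDerivAt hus).sub_const (ψ y)))).add
      (((hasDerivAt_pow 2 s).div_const 2).mul_const _)).hasDerivWithinAt
  · rw [interior_Icc] at hs
    have hsub := hconv.inner_gradient_le_sub (hd (u s)).hasGradientAt y
    have hmono : ‖gradient ψ (u t)‖ ^ 2 ≤ ‖gradient ψ (u s)‖ ^ 2 :=
      hu.antitoneOn_norm_gradient_sq hψ hconv hs.1.le ht.le hs.2.le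
    rw [← neg_sub (u s) y, inner_neg_right] at hsub
    rw [inner_neg_right, inner_neg_right, real_inner_self_eq_norm_sq, real_inner_comm]
    nlinarith [mul_le_mul_of_nonneg_left hmono hs.1.le]

end IsGradientFlow

end

/-- Proposition 3 (ii): if `ψ` is convex and `u` is a global solution of `u' = -∇ψ(u)`,
then for every `y ∈ H` and every `t > 0`,
`‖u'(t)‖ ≤ ‖∇ψ(y)‖ + (1/t)‖u(0) - y‖`. -/
theorem stmt_8 {H : Type*} [NormedAddCommGroup H] [InnerProductSpace ℝ H] [CompleteSpace H]
    (ψ : H → ℝ) (hψ : ContDiff ℝ 2 ψ) (hconv : ConvexOn ℝ univ ψ)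
    (u u' : ℝ → H)
    (hu : ∀ t ∈ Ici (0:ℝ), HasDerivWithinAt u (u' t) (Ici 0) t)
    (hode : ∀ t ∈ Ici (0:ℝ), u' t = -(gradient ψ (u t))) :
    ∀ y : H, ∀ t > (0:ℝ), ‖u' t‖ ≤ ‖gradient ψ y‖ + (1/t) * ‖u 0 - y‖ := by
  intro y t ht
  have hflow : IsGradientFlow ψ u := fun s hs => hode s hs ▸ hu s hs
  have hΦ := hflow.antitoneOn_lyapunov hψ hconv y ht (left_mem_Icc.2 ht.le)
    (right_mem_Icc.2 ht.le) ht.le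
  have hsub : -(‖gradient ψ y‖ * ‖u t - y‖) ≤ ψ (u t) - ψ y :=
    (neg_le_of_abs_le (abs_real_inner_le_norm _ _)).trans
      (hconv.inner_gradient_le_sub ((hψ.differentiable two_ne_zero) y).hasGradientAt (u t))
  simp only [zero_mul, ne_eq, OfNat.ofNat_ne_zero, not_false_eq_true, zero_pow,
    zero_div, add_zero] at hΦ
  have hsq : (t * ‖gradient ψ (u t)‖) ^ 2 ≤ (t * ‖gradient ψ y‖ + ‖u 0 - y‖) ^ 2 := by
    nlinarith [mul_le_mul_of_nonneg_left hsub ht.le, sq_nonneg (‖u t - y‖ - t * ‖gradient ψ y‖),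
      mul_nonneg (mul_nonneg ht.le (norm_nonneg (gradient ψ y))) (norm_nonneg (u 0 - y))]
  have hscaled := (pow_le_pow_iff_left₀ (by positivity) (by positivity) two_ne_zero).1 hsq
  rw [hode t ht.le, norm_neg, one_div_mul_eq_div, ← sub_le_iff_le_add', le_div_iff₀ ht]
  linarith
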